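/- arXiv:0706.3761 — 11 statements merged into one kernel-verified Lean document; each statement's English description precedes it below -/
import Mathlib

section
/- Let D be an integral domain with quotient field K, and let S be a multiplicative subset of D[X]. For each nonzero D-submodule E of K, define E^∘ := E·D[X]_S ∩ K. Then the map E ↦ E^∘ is a semistar operation on D, i.e., for all nonzero x ∈ K and nonzero D-submodules E, F of K: (xE)^∘ = xE^∘; E ⊆ F implies E^∘ ⊆ F^∘; E ⊆ E^∘; and (E^∘)^∘ = E^∘. -/
set_option linter.unusedSectionVars false
open Polynomial Pointwise

variable {D K : Type*} [CommRing D] [IsDomain D] [Field K] [Algebra D K] [IsFractionRing D K]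

/-- Auxiliary: if every `x * (coefficient of p)` lies in the `D`-submodule `E` of `K`,
then so does `x * (coefficient of p * q)`. -/
lemma mul_coeff_mem (E : Submodule D K) (x : K) (p q : D[X])
    (h : ∀ m, x * algebraMap D K (p.coeff m) ∈ E) (n : ℕ) :
    x * algebraMap D K ((p * q).coeff n) ∈ E := by
  rw [Polynomial.coeff_mul, map_sum, Finset.mul_sum]
  refine Submodule.sum_mem _ fun ij _ => ?_
  have hm := E.smul_mem (q.coeff ij.2) (h ij.1)
  rw [Algebra.smul_def, mul_comm] at hm
  rw [map_mul, ← mul_assoc]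
  exact hm

/-- The semistar operation `E ↦ E·D[X]_S ∩ K` induced by a multiplicative subset `S` of
`D[X]`: an element `x ∈ K` lies in `E·D[X]_S ∩ K` exactly when `x·g` has all its
coefficients in `E` for some `g ∈ S`. -/
def circ (S : Submonoid D[X]) (E : Submodule D K) : Submodule D K where
  carrier := {x : K | ∃ g ∈ S, ∀ n, x * algebraMap D K (g.coeff n) ∈ E}
  zero_mem' := ⟨1, S.one_mem, fun n => by simp⟩
  add_mem' := by
    rintro a b ⟨g, hg, ha⟩ ⟨h, hh, hb⟩
    refine ⟨g * h, S.mul_mem hg hh, fun n => ?_⟩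
    rw [add_mul]
    exact Submodule.add_mem E (mul_coeff_mem E a g h ha n)
      (by rw [mul_comm g h]; exact mul_coeff_mem E b h g hb n)
  smul_mem' := by
    rintro d x ⟨g, hg, hx⟩
    exact ⟨g, hg, fun n => by rw [smul_mul_assoc]; exact E.smul_mem d (hx n)⟩

lemma mem_circ (S : Submonoid D[X]) (E : Submodule D K) (x : K) :
    x ∈ circ S E ↔ ∃ g ∈ S, ∀ n, x * algebraMap D K (g.coeff n) ∈ E := Iff.rfl

lemma smul_mem_iff' (x : K) (hx : x ≠ 0) (E : Submodule D K) (z : K) :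
    z ∈ x • E ↔ x⁻¹ * z ∈ E := by
  rw [show x • E = E.map (DistribMulAction.toLinearMap D K x) from rfl, Submodule.mem_map]
  constructor
  · rintro ⟨e, he, rfl⟩
    simpa [DistribMulAction.toLinearMap, smul_eq_mul, inv_mul_cancel_left₀ hx] using he
  · intro h
    exact ⟨x⁻¹ * z, h, by simp [DistribMulAction.toLinearMap, smul_eq_mul,
      mul_inv_cancel_left₀ hx]⟩

lemma le_circ (S : Submonoid D[X]) (E : Submodule D K) : E ≤ circ S E := by
  intro x hxE
  refine ⟨1, S.one_mem, fun n => ?_⟩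
  rcases n with _ | n
  · simpa using hxE
  · simp [Polynomial.coeff_one]

/-- the map `E ↦ E^∘ := E·D[X]_S ∩ K` is a semistar operation on `D`. -/
theorem circ_isSemistar (S : Submonoid D[X]) :
    (∀ (x : K), x ≠ 0 → ∀ E : Submodule D K, E ≠ ⊥ →
        circ S (x • E) = x • circ S E) ∧
    (∀ E F : Submodule D K, E ≠ ⊥ → F ≠ ⊥ → E ≤ F → circ S E ≤ circ S F) ∧
    (∀ E : Submodule D K, E ≠ ⊥ → E ≤ circ S E) ∧
    (∀ E : Submodule D K, E ≠ ⊥ → circ S (circ S E) = circ S E) := by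
  refine ⟨?_, ?_, ?_, ?_⟩
  · intro x hx E _
    ext y
    simp only [mem_circ, smul_mem_iff' x hx, ← mul_assoc]
  · rintro E F _ _ hEF y ⟨g, hg, h⟩
    exact ⟨g, hg, fun n => hEF (h n)⟩
  · intro E _
    exact le_circ S E
  · intro E _
    refine le_antisymm ?_ (le_circ S _)
    rintro x ⟨g, hg, hgc⟩
    have hgc' : ∀ n, ∃ t ∈ S, ∀ m,
        (x * algebraMap D K (g.coeff n)) * algebraMap D K (t.coeff m) ∈ E :=
      fun n => hgc n
    choose h hhS hh using hgc'
    set H := ∏ i ∈ Finset.range (g.natDegree + 1), h i with hH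
    refine ⟨g * H, S.mul_mem hg (Submonoid.prod_mem S fun i _ => hhS i), fun k => ?_⟩
    rw [Polynomial.coeff_mul, map_sum, Finset.mul_sum]
    refine Submodule.sum_mem _ fun ij _ => ?_
    rw [map_mul, ← mul_assoc]
    by_cases hi : ij.1 ≤ g.natDegree
    · have hsplit : H = h ij.1 * ∏ i ∈ (Finset.range (g.natDegree + 1)).erase ij.1, h i :=
        (Finset.mul_prod_erase _ _ (Finset.mem_range.mpr (Nat.lt_succ_of_le hi))).symm
      rw [hsplit]
      exact mul_coeff_mem E _ _ _ (hh ij.1) ij.2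
    · rw [Polynomial.coeff_eq_zero_of_natDegree_lt (lt_of_not_ge hi)]
      simp
end

section
/- Let D be an integral domain with quotient field K and S a multiplicative subset of D[X]. The semistar operation ∘_S defined by E^∘ := E·D[X]_S ∩ K is stable, i.e., (E ∩ F)^∘ = E^∘ ∩ F^∘ for all nonzero D-submodules E, F of K. -/
set_option linter.unusedSectionVars false

open Polynomial Pointwise

variable {D K : Type*} [CommRing D] [IsDomain D] [Field K] [Algebra D K] [IsFractionRing D K]

/-- the semistar operation `∘_S : E ↦ E·D[X]_S ∩ K` is stable. -/
theorem circ_stable (S : Submonoid D[X]) (E F : Submodule D K) (hE : E ≠ ⊥) (hF : F ≠ ⊥) :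
    circ S (E ⊓ F) = circ S E ⊓ circ S F := by
  apply le_antisymm
  · rintro x ⟨g, hg, hx⟩
    exact ⟨⟨g, hg, fun n => (hx n).1⟩, ⟨g, hg, fun n => (hx n).2⟩⟩
  · rintro x ⟨⟨g, hg, hxE⟩, ⟨h, hh, hxF⟩⟩
    refine ⟨g * h, S.mul_mem hg hh, fun n => ?_⟩
    exact ⟨mul_coeff_mem E x g h hxE n, by rw [mul_comm g h]; exact mul_coeff_mem F x h g hxF n⟩
end

section
/- Let D be an integral domain with quotient field K and S a multiplicative subset of D[X]. The semistar operation ∘_S given by E^∘ := E·D[X]_S ∩ K is of finite type: for every nonzero D-submodule E of K, E^∘ equals the union of F^∘ over all nonzero finitely generated D-submodules F of K with F ⊆ E. -/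
set_option linter.unusedSectionVars false

open Polynomial Pointwise

variable {D K : Type*} [CommRing D] [IsDomain D] [Field K] [Algebra D K] [IsFractionRing D K]

/-- `∘_S` is of finite type: `E^∘` is the union of `F^∘` over the nonzero
finitely generated `D`-submodules `F ⊆ E`. -/
theorem circ_finiteType (S : Submonoid D[X]) (E : Submodule D K) (hE : E ≠ ⊥) :
    (circ S E : Set K) =
      ⋃ (F : Submodule D K) (_ : F.FG ∧ F ≠ ⊥ ∧ F ≤ E), (circ S F : Set K) := by
  obtain ⟨e, heE, hene⟩ := Submodule.exists_mem_ne_zero_of_ne_bot hE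
  ext x
  simp only [Set.mem_iUnion, SetLike.mem_coe]
  constructor
  · rintro ⟨g, hg, hx⟩
    set F : Submodule D K :=
      Submodule.span D (insert e ((fun n => x * algebraMap D K (g.coeff n)) '' ↑(g.support)))
    refine ⟨F, ⟨?_, ?_, ?_⟩, g, hg, fun n => ?_⟩
    · exact Submodule.fg_span (Set.Finite.insert e (Set.Finite.image _ (g.support : Set ℕ).toFinite))
    · intro hF
      apply hene
      have : e ∈ F := Submodule.subset_span (Set.mem_insert _ _)
      rw [hF] at this
      simpa using this
    · rw [Submodule.span_le]
      rintro y (rfl | ⟨n, _, rfl⟩)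
      · exact heE
      · exact hx n
    · by_cases hn : n ∈ g.support
      · exact Submodule.subset_span (Set.mem_insert_of_mem _ ⟨n, hn, rfl⟩)
      · simp [Polynomial.notMem_support_iff.mp hn]
  · rintro ⟨F, ⟨-, -, hFE⟩, g, hg, hx⟩
    exact ⟨g, hg, fun n => hFE (hx n)⟩
end

section
/- Let D be an integral domain with quotient field K, S a multiplicative subset of D[X], and ∘ the semistar operation E ↦ E·D[X]_S ∩ K. If g ∈ S is a nonzero polynomial, then c_D(g)^∘ = D^∘, where c_D(g) is the fractional ideal of D generated by the coefficients of g. -/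
set_option linter.unusedSectionVars false

open Polynomial Pointwise

variable {D K : Type*} [CommRing D] [IsDomain D] [Field K] [Algebra D K] [IsFractionRing D K]

/-- The content `c_D(g)` of a polynomial `g ∈ D[X]`, viewed as the `D`-submodule of `K`
generated by the coefficients of `g`. -/
def contentK (g : D[X]) : Submodule D K :=
  Submodule.span D (Set.range fun n => algebraMap D K (g.coeff n))

/-- if `g ∈ S` is a nonzero polynomial then `c_D(g)^∘ = D^∘`
(here `(1 : Submodule D K)` is the image of `D` in `K`). -/
theorem content_circ_eq (S : Submonoid D[X]) (g : D[X]) (hgS : g ∈ S) (hg : g ≠ 0) :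
    circ S (contentK (K := K) g) = circ S (1 : Submodule D K) := by
  apply le_antisymm
  · rintro x ⟨h, hh, hx⟩
    refine ⟨h, hh, fun n => ?_⟩
    have hle : contentK (K := K) g ≤ 1 := by
      rw [contentK, Submodule.span_le]
      rintro _ ⟨m, rfl⟩
      exact Submodule.mem_one.mpr ⟨g.coeff m, rfl⟩
    exact hle (hx n)
  · rintro x ⟨h, hh, hx⟩
    refine ⟨g * h, S.mul_mem hgS hh, fun n => ?_⟩
    rw [Polynomial.coeff_mul, map_sum, Finset.mul_sum]
    refine Submodule.sum_mem _ fun ij _ => ?_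
    obtain ⟨d, hd⟩ := (Submodule.mem_one).mp (hx ij.2)
    rw [map_mul, mul_comm (algebraMap D K (g.coeff ij.1)), ← mul_assoc, ← hd,
      ← Algebra.smul_def]
    exact Submodule.smul_mem _ d (Submodule.subset_span ⟨ij.1, rfl⟩)
end

section
/- Let D be an integral domain with quotient field K, S a multiplicative subset of D[X], and ∇(S) the set of prime ideals P of D maximal with respect to the property P[X] ∩ S = ∅. Then for every nonzero D-submodule E of K, E·D[X]_S ∩ K = ⋂_{P ∈ ∇(S)} E·D_P. -/
/-!
Write `I = (E :_D x) = {d ∈ D | d x ∈ E}`. Then `x ∈ E·D[X]_S ∩ K` says that `I[X]` meets `S`, and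
`x ∈ E·D_P` says that `I ⊄ P`, so the theorem reduces to: `I[X] ∩ S = ∅` iff `I` lies in some
member of `∇(S)`. By Zorn there is an ideal `M ⊇ I` maximal with `M[X] ∩ S = ∅`; it is prime, because
a prime `Q` of `D[X]` containing `M[X]` and disjoint from `S` contracts to a prime `P ⊇ M` of `D`
with `P[X] ⊆ Q`, so `P = M` by maximality.
-/

set_option linter.unusedSectionVars false

open Polynomial Pointwise

variable {D K : Type*} [CommRing D] [IsDomain D] [Field K] [Algebra D K] [IsFractionRing D K]

/-- `E·D_P`, the `D_P`-submodule of `K` generated by `E`, described elementwise. -/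
def locDP (P : Ideal D) (E : Submodule D K) : Set K :=
  {x | ∃ s : D, s ∉ P ∧ algebraMap D K s * x ∈ E}

/-- `Δ(S)`: the primes `P` of `D` with `P[X] ∩ S = ∅`. -/
def DeltaS (S : Submonoid D[X]) : Set (Ideal D) :=
  {P | P.IsPrime ∧ ∀ g ∈ S, ∃ n, g.coeff n ∉ P}

/-- `∇(S)`: the maximal elements of `Δ(S)`. -/
def NablaS (S : Submonoid D[X]) : Set (Ideal D) :=
  {P ∈ DeltaS S | ∀ Q ∈ DeltaS S, P ≤ Q → P = Q}

namespace Ideal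

variable {R : Type*} [CommRing R]

theorem exists_isPrime_le_disjoint_map_C (S : Submonoid R[X]) {I : Ideal R}
    (hI : Disjoint (I.map C : Set R[X]) S) :
    ∃ P : Ideal R, P.IsPrime ∧ I ≤ P ∧ Disjoint (P.map C : Set R[X]) S := by
  obtain ⟨Q, hQ, hIQ, hQS⟩ := (I.map C).exists_le_prime_disjoint S hI
  exact ⟨Q.comap C, inferInstance, map_le_iff_le_comap.1 hIQ, hQS.mono_left map_comap_le⟩

theorem disjoint_map_C_sSup_of_isChain (S : Submonoid R[X]) {c : Set (Ideal R)}
    (hc : IsChain (· ≤ ·) c) (hne : c.Nonempty)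
    (hcS : ∀ J ∈ c, Disjoint (J.map C : Set R[X]) S) :
    Disjoint ((sSup c).map C : Set R[X]) S := by
  have : Nonempty c := hne.to_subtype
  have hdir : Directed (· ≤ ·) fun J : c => (J : Ideal R).map C :=
    (hc.mono_rel fun _ _ => map_mono (f := C)).directed
  rw [sSup_eq_iSup', map_iSup]
  refine Set.disjoint_left.2 fun g hg => ?_
  obtain ⟨J, hJ⟩ := (Submodule.mem_iSup_of_directed _ hdir).1 hg
  exact Set.disjoint_left.1 (hcS J J.2) hJ

theorem exists_le_maximal_disjoint_map_C (S : Submonoid R[X]) {I : Ideal R}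
    (hI : Disjoint (I.map C : Set R[X]) S) :
    ∃ M, I ≤ M ∧ Maximal (fun J : Ideal R => Disjoint (J.map C : Set R[X]) S) M :=
  zorn_le_nonempty₀ _ (fun c hcS hc J hJ =>
    ⟨sSup c, disjoint_map_C_sSup_of_isChain S hc ⟨J, hJ⟩ hcS, fun _ => le_sSup⟩) I hI

theorem isPrime_of_maximal_disjoint_map_C {S : Submonoid R[X]} {M : Ideal R}
    (hM : Maximal (fun J : Ideal R => Disjoint (J.map C : Set R[X]) S) M) : M.IsPrime := by
  obtain ⟨P, hP, hMP, hPS⟩ := exists_isPrime_le_disjoint_map_C S hM.1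
  rwa [le_antisymm (hM.2 hPS hMP) hMP] at hP

end Ideal

theorem mem_DeltaS_iff {S : Submonoid D[X]} {P : Ideal D} :
    P ∈ DeltaS S ↔ P.IsPrime ∧ Disjoint (P.map C : Set D[X]) S := by
  simp only [DeltaS, Set.mem_ofPred_eq, Set.disjoint_right, SetLike.mem_coe,
    Ideal.mem_map_C_iff, not_forall]

theorem exists_mem_NablaS_le (S : Submonoid D[X]) {I : Ideal D}
    (hI : Disjoint (I.map C : Set D[X]) S) : ∃ P ∈ NablaS S, I ≤ P := by
  obtain ⟨M, hIM, hM⟩ := Ideal.exists_le_maximal_disjoint_map_C S hI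
  refine ⟨M, ⟨mem_DeltaS_iff.2 ⟨Ideal.isPrime_of_maximal_disjoint_map_C hM, hM.1⟩,
    fun Q hQ hMQ => le_antisymm hMQ (hM.2 (mem_DeltaS_iff.1 hQ).2 hMQ)⟩, hIM⟩

theorem disjoint_map_C_iff_exists_mem_NablaS_le {S : Submonoid D[X]} {I : Ideal D} :
    Disjoint (I.map C : Set D[X]) S ↔ ∃ P ∈ NablaS S, I ≤ P :=
  ⟨exists_mem_NablaS_le S, fun ⟨_, hP, hIP⟩ =>
    (mem_DeltaS_iff.1 hP.1).2.mono_left (Ideal.map_mono hIP)⟩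

theorem mem_circ_iff {S : Submonoid D[X]} {E : Submodule D K} {x : K} :
    x ∈ circ S E ↔ ¬Disjoint ((E.colon {x}).map C : Set D[X]) S := by
  simp only [circ, Submodule.mem_mk, AddSubmonoid.mem_mk, AddSubsemigroup.mem_mk,
    Set.mem_ofPred_eq, Set.not_disjoint_iff, SetLike.mem_coe, Ideal.mem_map_C_iff,
    Submodule.mem_colon_singleton, Algebra.smul_def, mul_comm x]
  exact ⟨fun ⟨g, hg, hx⟩ => ⟨g, hx, hg⟩, fun ⟨g, hx, hg⟩ => ⟨g, hg, hx⟩⟩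

theorem mem_locDP_iff {P : Ideal D} {E : Submodule D K} {x : K} :
    x ∈ locDP P E ↔ ¬E.colon {x} ≤ P := by
  simp only [locDP, Set.mem_ofPred_eq, SetLike.not_le_iff_exists, Submodule.mem_colon_singleton,
    Algebra.smul_def]
  exact ⟨fun ⟨s, hs, hx⟩ => ⟨s, hx, hs⟩, fun ⟨s, hx, hs⟩ => ⟨s, hs, hx⟩⟩

theorem circ_eq_iInter_locDP_general (S : Submonoid D[X]) (E : Submodule D K) :
    (circ S E : Set K) = ⋂ P ∈ NablaS (D := D) S, locDP P E := by
  ext x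
  simp only [SetLike.mem_coe, Set.mem_iInter, mem_circ_iff, mem_locDP_iff,
    disjoint_map_C_iff_exists_mem_NablaS_le, not_exists, not_and]

/-- `E·D[X]_S ∩ K = ⋂_{P ∈ ∇(S)} E·D_P`. -/
theorem circ_eq_iInter_locDP (S : Submonoid D[X]) (E : Submodule D K) (hE : E ≠ ⊥) :
    (circ S E : Set K) = ⋂ P ∈ NablaS (D := D) S, locDP P E :=
  circ_eq_iInter_locDP_general S E
end

section
/- Let D be an integral domain with quotient field K and S a multiplicative subset of D[X] with extended saturation S^♯ := D[X] \ ⋃{P[X] : P ∈ Spec(D), P[X] ∩ S = ∅}. Then for every nonzero D-submodule E of K, E·D[X]_S ∩ K = E·D[X]_{S^♯} ∩ K. -/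
set_option linter.unusedSectionVars false

open Polynomial Pointwise

variable {D K : Type*} [CommRing D] [IsDomain D] [Field K] [Algebra D K] [IsFractionRing D K]

/-- The set-theoretic version of `E ↦ E·D[X]_T ∩ K` for an arbitrary subset `T ⊆ D[X]`. -/
def circSet (T : Set D[X]) (E : Submodule D K) : Set K :=
  {x : K | ∃ g ∈ T, ∀ n, x * algebraMap D K (g.coeff n) ∈ E}

/-- The extended saturation `S^♯` of `S` in `D[X]`. -/
def eSat (S : Set D[X]) : Set D[X] :=
  {g | ∀ P : Ideal D, P.IsPrime → (∀ h ∈ S, ∃ n, h.coeff n ∉ P) → ∃ n, g.coeff n ∉ P}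

/-- `E·D[X]_S ∩ K = E·D[X]_{S^♯} ∩ K` for every nonzero `D`-submodule `E` of `K`. -/
theorem circSet_eSat (S : Submonoid D[X]) (E : Submodule D K) (hE : E ≠ ⊥) :
    circSet (S : Set D[X]) E = circSet (eSat (S : Set D[X])) E := by
  apply Set.Subset.antisymm
  · rintro x ⟨g, hg, hx⟩
    exact ⟨g, fun P _ hP => hP g hg, hx⟩
  · rintro x ⟨g, hg, hx⟩
    by_contra hc
    simp only [circSet, Set.mem_setOf_eq] at hc
    push_neg at hc
    -- the conductor ideal I = {a | x * a ∈ E}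
    set I : Ideal D := E.comap (LinearMap.toSpanSingleton D K x) with hI
    have hmemI : ∀ a : D, a ∈ I ↔ x * algebraMap D K a ∈ E := by
      intro a
      rw [hI, Submodule.mem_comap, LinearMap.toSpanSingleton_apply, Algebra.smul_def, mul_comm]
    have hdisj : Disjoint ((I.map (Polynomial.C : D →+* D[X]) : Ideal D[X]) : Set D[X])
        (S : Set D[X]) := by
      rw [Set.disjoint_left]
      intro f hf hfS
      rw [SetLike.mem_coe, Ideal.mem_map_C_iff] at hf
      obtain ⟨n, hn⟩ := hc f hfS
      exact hn ((hmemI _).mp (hf n))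
    obtain ⟨Q, hQprime, hQle, hQdisj⟩ := Ideal.exists_le_prime_disjoint _ S hdisj
    set P : Ideal D := Q.comap (Polynomial.C : D →+* D[X]) with hP
    have hPprime : P.IsPrime := Ideal.IsPrime.comap _
    have hScond : ∀ h ∈ (S : Set D[X]), ∃ n, h.coeff n ∉ P := by
      intro h hh
      by_contra hall
      push_neg at hall
      have hhQ : h ∈ Q :=
        Ideal.polynomial_mem_ideal_of_coeff_mem_ideal Q h fun n => hall n
      exact Set.disjoint_left.mp hQdisj hhQ hh
    obtain ⟨n, hn⟩ := hg P hPprime hScond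
    apply hn
    rw [hP, Ideal.mem_comap]
    apply hQle
    exact Ideal.mem_map_of_mem _ ((hmemI _).mpr (hx n))
end

section
/- Let D be an integral domain and F a localizing system of ideals of D (nontrivial: F nonempty and (0) ∉ F). Then for every nonzero D-submodule E of the quotient field K, the assignment E ↦ E_F := ⋃_{I ∈ F} (E : I) defines a stable semistar operation on D, where (E : I) := {x ∈ K : xI ⊆ E}. -/
/-!
A localizing system is closed under products, hence under finite intersections, so the union
`⋃_{I ∈ F} (E : I)` is directed and equals the supremum `EF F E`. Stability then comes from
`(E : I) ∩ (E' : J) ⊆ (E ∩ E' : I ∩ J)`. For idempotence, if `x I ⊆ E_F` with `I ∈ F`, every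
`x i` has its ideal of denominators `{d : x i d ∈ E}` in `F`; the transitivity axiom puts the
ideal of denominators `{d : x d ∈ E}` of `x` itself in `F`, so `x ∈ E_F`.
-/

set_option linter.unusedSectionVars false

open Pointwise

variable {D K : Type*} [CommRing D] [IsDomain D] [Field K] [Algebra D K] [IsFractionRing D K]

/-- `(E : I) = {x ∈ K : xI ⊆ E}`, as a `D`-submodule of `K`. -/
def colonK (E : Submodule D K) (I : Ideal D) : Submodule D K where
  carrier := {x : K | ∀ a ∈ I, x * algebraMap D K a ∈ E}
  zero_mem' := fun a _ => by simp
  add_mem' := by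
    rintro x y hx hy a ha
    rw [add_mul]
    exact E.add_mem (hx a ha) (hy a ha)
  smul_mem' := by
    rintro d x hx a ha
    rw [smul_mul_assoc]
    exact E.smul_mem d (hx a ha)

/-- `E_F := ⋃_{I ∈ F} (E : I)`, as a `D`-submodule of `K` (the union is directed when
`F` is a localizing system, so it coincides with the supremum). -/
def EF (F : Set (Ideal D)) (E : Submodule D K) : Submodule D K :=
  ⨆ I ∈ F, colonK E I

structure Ideal.IsLocalizingSystem {R : Type*} [CommRing R] (F : Set (Ideal R)) : Prop where
  mem_of_le : ∀ I ∈ F, ∀ J : Ideal R, I ≤ J → J ∈ F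
  mem_of_colon_mem : ∀ I ∈ F, ∀ J : Ideal R, (∀ i ∈ I, J.colon (Ideal.span {i}) ∈ F) → J ∈ F

namespace Ideal.IsLocalizingSystem

variable {R : Type*} [CommRing R] {F : Set (Ideal R)}

theorem mul_mem (hF : IsLocalizingSystem F) {I J : Ideal R} (hI : I ∈ F) (hJ : J ∈ F) :
    I * J ∈ F := by
  refine hF.mem_of_colon_mem I hI (I * J) fun i hi => hF.mem_of_le J hJ _ fun j hj => ?_
  rw [Submodule.mem_colon_span_singleton, mul_comm I J]
  exact Ideal.mul_mem_mul hj hi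

theorem inf_mem (hF : IsLocalizingSystem F) {I J : Ideal R} (hI : I ∈ F) (hJ : J ∈ F) :
    I ⊓ J ∈ F :=
  hF.mem_of_le _ (hF.mul_mem hI hJ) _ Ideal.mul_le_inf

end Ideal.IsLocalizingSystem

open Ideal

theorem Submodule.mem_pointwise_smul_iff_inv_smul_mem₀ {R M G₀ : Type*} [Semiring R]
    [AddCommMonoid M] [Module R M] [GroupWithZero G₀] [DistribMulAction G₀ M]
    [SMulCommClass G₀ R M] {a : G₀} (ha : a ≠ 0) {S : Submodule R M} {x : M} :
    x ∈ a • S ↔ a⁻¹ • x ∈ S :=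
  Set.mem_smul_set_iff_inv_smul_mem₀ ha (S : Set M) x

section colonK

variable {E E' : Submodule D K} {I J : Ideal D}

theorem le_colonK : E ≤ colonK E I := fun e he a _ => by
  rw [mul_comm, ← Algebra.smul_def]
  exact E.smul_mem a he

theorem colonK_anti (h : I ≤ J) : colonK E J ≤ colonK E I := fun _ hx a ha => hx a (h ha)

theorem colonK_mono (h : E ≤ E') : colonK E I ≤ colonK E' I := fun _ hx a ha => h (hx a ha)

theorem colonK_smul {x : K} (hx : x ≠ 0) : colonK (x • E) I = x • colonK E I := by
  ext y
  simp only [Submodule.mem_pointwise_smul_iff_inv_smul_mem₀ hx]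
  exact forall₂_congr fun a _ => by
    rw [Submodule.mem_pointwise_smul_iff_inv_smul_mem₀ hx, smul_mul_assoc]

end colonK

section EF

variable {F : Set (Ideal D)} {E E' : Submodule D K}

theorem EF_mono (h : E ≤ E') : EF F E ≤ EF F E' :=
  iSup₂_mono fun _ _ => colonK_mono h

theorem le_EF (hne : F.Nonempty) : E ≤ EF F E :=
  let ⟨_, hI⟩ := hne
  le_colonK.trans (le_biSup (colonK E) hI)

theorem EF_smul {x : K} (hx : x ≠ 0) : EF F (x • E) = x • EF F E := by
  simp only [EF, colonK_smul hx, Submodule.smul_iSup']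

theorem mem_EF (hF : IsLocalizingSystem F) (hne : F.Nonempty) {x : K} :
    x ∈ EF F E ↔ ∃ I ∈ F, x ∈ colonK E I := by
  have : Nonempty F := hne.to_subtype
  rw [EF, iSup_subtype', Submodule.mem_iSup_of_directed]
  · simp [Subtype.exists]
  · rintro ⟨I, hI⟩ ⟨J, hJ⟩
    exact ⟨⟨I ⊓ J, hF.inf_mem hI hJ⟩, colonK_anti inf_le_left, colonK_anti inf_le_right⟩

theorem coe_EF (hF : IsLocalizingSystem F) (hne : F.Nonempty) :
    (EF F E : Set K) = ⋃ I ∈ F, (colonK E I : Set K) := by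
  ext x
  simp only [SetLike.mem_coe, Set.mem_iUnion, mem_EF hF hne, exists_prop]

theorem EF_inf (hF : IsLocalizingSystem F) (hne : F.Nonempty) :
    EF F (E ⊓ E') = EF F E ⊓ EF F E' := by
  refine le_antisymm (le_inf (EF_mono inf_le_left) (EF_mono inf_le_right)) ?_
  rintro x ⟨hxE, hxE'⟩
  obtain ⟨I, hI, hxI⟩ := (mem_EF hF hne).mp hxE
  obtain ⟨J, hJ, hxJ⟩ := (mem_EF hF hne).mp hxE'
  exact (mem_EF hF hne).mpr ⟨I ⊓ J, hF.inf_mem hI hJ, fun a ha => ⟨hxI a ha.1, hxJ a ha.2⟩⟩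

theorem colon_singleton_mem_of_mem_colonK_EF (hF : IsLocalizingSystem F) (hne : F.Nonempty)
    {x : K} {I : Ideal D} (hI : I ∈ F) (hx : x ∈ colonK (EF F E) I) : E.colon {x} ∈ F := by
  refine hF.mem_of_colon_mem I hI _ fun i hi => ?_
  obtain ⟨J, hJ, hxiJ⟩ := (mem_EF hF hne).mp (hx i hi)
  refine hF.mem_of_le J hJ _ fun b hb => ?_
  rw [Submodule.mem_colon_span_singleton, Submodule.mem_colon_singleton, smul_eq_mul,
    Algebra.smul_def, map_mul, mul_comm, mul_comm (algebraMap D K b), ← mul_assoc]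
  exact hxiJ b hb

theorem EF_EF (hF : IsLocalizingSystem F) (hne : F.Nonempty) : EF F (EF F E) = EF F E := by
  refine le_antisymm (fun x hx => ?_) (le_EF hne)
  obtain ⟨I, hI, hxI⟩ := (mem_EF hF hne).mp hx
  refine (mem_EF hF hne).mpr
    ⟨E.colon {x}, colon_singleton_mem_of_mem_colonK_EF hF hne hI hxI, fun a ha => ?_⟩
  rw [mul_comm, ← Algebra.smul_def]
  exact Submodule.mem_colon_singleton.mp ha

end EF

theorem EF_stable_semistar_general (F : Set (Ideal D)) (hne : F.Nonempty)
    (hup : ∀ I ∈ F, ∀ J : Ideal D, I ≤ J → J ∈ F)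
    (htr : ∀ I ∈ F, ∀ J : Ideal D, (∀ i ∈ I, J.colon (Ideal.span {i}) ∈ F) → J ∈ F) :
    (∀ E : Submodule D K, E ≠ ⊥ → (EF F E : Set K) = ⋃ I ∈ F, (colonK E I : Set K)) ∧
    (∀ (x : K), x ≠ 0 → ∀ E : Submodule D K, E ≠ ⊥ → EF F (x • E) = x • EF F E) ∧
    (∀ E E' : Submodule D K, E ≠ ⊥ → E' ≠ ⊥ → E ≤ E' → EF F E ≤ EF F E') ∧
    (∀ E : Submodule D K, E ≠ ⊥ → E ≤ EF F E) ∧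
    (∀ E : Submodule D K, E ≠ ⊥ → EF F (EF F E) = EF F E) ∧
    (∀ E E' : Submodule D K, E ≠ ⊥ → E' ≠ ⊥ → EF F (E ⊓ E') = EF F E ⊓ EF F E') := by
  have hF : IsLocalizingSystem F := ⟨hup, htr⟩
  exact ⟨fun _ _ => coe_EF hF hne, fun _ hx _ _ => EF_smul hx, fun _ _ _ _ => EF_mono,
    fun _ _ => le_EF hne, fun _ _ => EF_EF hF hne, fun _ _ _ _ => EF_inf hF hne⟩

/-- for a (nontrivial) localizing system `F` of ideals of `D`, the assignment
`E ↦ E_F = ⋃_{I ∈ F}(E : I)` is a stable semistar operation on `D`. -/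
theorem EF_stable_semistar (F : Set (Ideal D)) (hne : F.Nonempty) (h0 : ⊥ ∉ F)
    (hup : ∀ I ∈ F, ∀ J : Ideal D, I ≤ J → J ∈ F)
    (htr : ∀ I ∈ F, ∀ J : Ideal D, (∀ i ∈ I, J.colon (Ideal.span {i}) ∈ F) → J ∈ F) :
    (∀ E : Submodule D K, E ≠ ⊥ → (EF F E : Set K) = ⋃ I ∈ F, (colonK E I : Set K)) ∧
    (∀ (x : K), x ≠ 0 → ∀ E : Submodule D K, E ≠ ⊥ → EF F (x • E) = x • EF F E) ∧
    (∀ E E' : Submodule D K, E ≠ ⊥ → E' ≠ ⊥ → E ≤ E' → EF F E ≤ EF F E') ∧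
    (∀ E : Submodule D K, E ≠ ⊥ → E ≤ EF F E) ∧
    (∀ E : Submodule D K, E ≠ ⊥ → EF F (EF F E) = EF F E) ∧
    (∀ E E' : Submodule D K, E ≠ ⊥ → E' ≠ ⊥ → EF F (E ⊓ E') = EF F E ⊓ EF F E') :=
  EF_stable_semistar_general F hne hup htr
end

section
/- Let D be an integral domain and F a localizing system of finite type on D. Let Δ(F) := {Q ∈ Spec(D) : Q ∉ F}. Then F = F(Δ(F)) := {I ideal of D : I ⊄ Q for every Q ∈ Δ(F)}. -/
set_option linter.unusedSectionVars false

variable {D : Type*} [CommRing D] [IsDomain D]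

/-- if `F` is a localizing system of finite type on `D` then
`F = F(Δ(F)) = {I : I ⊄ Q for every prime Q ∉ F}`. -/
theorem locSys_finiteType_spectral (F : Set (Ideal D)) (hne : F.Nonempty) (h0 : ⊥ ∉ F)
    (hup : ∀ I ∈ F, ∀ J : Ideal D, I ≤ J → J ∈ F)
    (htr : ∀ I ∈ F, ∀ J : Ideal D, (∀ i ∈ I, J.colon (Ideal.span {i}) ∈ F) → J ∈ F)
    (hft : ∀ I ∈ F, ∃ J ∈ F, J ≤ I ∧ J.FG) :
    F = {I : Ideal D | ∀ Q : Ideal D, Q.IsPrime → Q ∉ F → ¬ I ≤ Q} := by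
  obtain ⟨I0, hI0⟩ := hne
  have hTop : (⊤ : Ideal D) ∈ F := hup I0 hI0 ⊤ le_top
  ext I
  constructor
  · intro hI Q _ hQF hle
    exact hQF (hup I hI Q hle)
  · intro hI
    by_contra hIF
    -- Zorn: find a maximal ideal Q ⊇ I with Q ∉ F
    set S : Set (Ideal D) := {J : Ideal D | I ≤ J ∧ J ∉ F} with hS
    have hchain : ∀ c ⊆ S, IsChain (· ≤ ·) c → ∀ y ∈ c,
        ∃ ub ∈ S, ∀ z ∈ c, z ≤ ub := by
      intro c hcS hc y hy
      refine ⟨sSup c, ⟨(hcS hy).1.trans (le_sSup hy), ?_⟩, fun z hz => le_sSup hz⟩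
      intro hsup
      obtain ⟨J, hJF, hJle, hJfg⟩ := hft _ hsup
      have hcomp := (Submodule.fg_iff_compact J).mp hJfg
      rw [CompleteLattice.isCompactElement_iff_le_of_directed_sSup_le] at hcomp
      obtain ⟨z, hzc, hJz⟩ := hcomp c ⟨y, hy⟩ hc.directedOn hJle
      exact (hcS hzc).2 (hup J hJF z hJz)
    obtain ⟨Q, hIQ, hQS, hQmax⟩ := zorn_le_nonempty₀ S hchain I ⟨le_rfl, hIF⟩
    have hQF : Q ∉ F := hQS.2
    -- Q is prime
    have hQp : Q.IsPrime := by
      constructor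
      · intro h; exact hQF (h ▸ hTop)
      · intro a b hab
        by_contra hor
        push_neg at hor
        obtain ⟨ha, hb⟩ := hor
        have key : ∀ x : D, x ∉ Q → Q ⊔ Ideal.span {x} ∈ F := by
          intro x hx
          by_contra hxF
          have hmem : Q ⊔ Ideal.span {x} ∈ S :=
            ⟨hQS.1.trans le_sup_left, hxF⟩
          have := hQmax hmem le_sup_left
          exact hx (this (Ideal.mem_sup_right (Ideal.mem_span_singleton_self x)))
        have haF := key a ha
        have hbF := key b hb
        apply hQF
        refine htr _ haF Q ?_
        intro i hi
        refine hup _ hbF _ ?_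
        intro x hx
        rw [Ideal.mem_colon_span_singleton]
        obtain ⟨q, hq, a', ha', rfl⟩ := Submodule.mem_sup.mp hi
        obtain ⟨r, hr, b', hb', rfl⟩ := Submodule.mem_sup.mp hx
        obtain ⟨c, rfl⟩ := Ideal.mem_span_singleton'.mp ha'
        obtain ⟨d, rfl⟩ := Ideal.mem_span_singleton'.mp hb'
        have : (r + d * b) * (q + c * a) =
            r * q + (c * a) * r + (d * b) * q + (d * c) * (a * b) := by ring
        rw [this]
        exact Q.add_mem (Q.add_mem (Q.add_mem (Q.mul_mem_right q hr)
          (Q.mul_mem_left _ hr)) (Q.mul_mem_left _ hq)) (Q.mul_mem_left _ hab)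
    exact hI Q hQp hQF hQS.1
end

section
/- Let D be an integral domain and F a localizing system of finite type on D. Define S(F) := D[X] \ ⋃{Q[X] : Q ∈ Spec(D), Q ∉ F}. Then S(F) is an extended saturated multiplicative subset of D[X], and for every nonzero D-submodule E of the quotient field K, E_F = E·D[X]_{S(F)} ∩ K, where E_F := ⋃_{I ∈ F}(E : I). -/
set_option linter.unusedSectionVars false

open Polynomial Pointwise

variable {D K : Type*} [CommRing D] [IsDomain D] [Field K] [Algebra D K] [IsFractionRing D K]

/-- `S(F) := D[X] \ ⋃ {Q[X] : Q ∈ Spec D, Q ∉ F}`. -/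
def SF (F : Set (Ideal D)) : Set D[X] :=
  {g | ∀ Q : Ideal D, Q.IsPrime → Q ∉ F → ∃ n, g.coeff n ∉ Q}

/-- A polynomial whose coefficients are exactly the entries of the list `l` (padded by 0). -/
noncomputable def polyOfList {R : Type*} [Semiring R] (l : List R) : Polynomial R :=
  ∑ i ∈ Finset.range l.length, Polynomial.monomial i (l.getD i 0)

lemma polyOfList_coeff {R : Type*} [Semiring R] (l : List R) (k : ℕ) :
    (polyOfList l).coeff k = l.getD k 0 := by
  classical
  rw [polyOfList, Polynomial.finset_sum_coeff]
  simp only [Polynomial.coeff_monomial]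
  rw [Finset.sum_ite_eq' (Finset.range l.length) k (fun i => l.getD i 0)]
  by_cases h : k ∈ Finset.range l.length
  · rw [if_pos h]
  · rw [if_neg h, List.getD_eq_default _ _ (Nat.le_of_not_lt (by simpa using h))]

lemma polyOfList_coeff_mem {R : Type*} [CommRing R] (s : Finset R) (J : Ideal R)
    (hs : ∀ a ∈ s, a ∈ J) (n : ℕ) : (polyOfList s.toList).coeff n ∈ J := by
  rw [polyOfList_coeff]
  rcases lt_or_ge n s.toList.length with h | h
  · rw [List.getD_eq_getElem _ _ h]
    exact hs _ (by rw [← Finset.mem_toList]; exact List.getElem_mem _)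
  · rw [List.getD_eq_default _ _ h]; exact J.zero_mem

lemma mem_of_polyOfList_coeffs {R : Type*} [CommRing R] (s : Finset R) (Q : Ideal R)
    (h : ∀ n, (polyOfList s.toList).coeff n ∈ Q) : ∀ a ∈ s, a ∈ Q := by
  intro a ha
  rw [← Finset.mem_toList] at ha
  obtain ⟨i, hi, rfl⟩ := List.mem_iff_getElem.mp ha
  have := h i
  rwa [polyOfList_coeff, List.getD_eq_getElem _ _ hi] at this

/-- The ideal of `a : D` with `x * a ∈ E`. -/
def memIdeal (E : Submodule D K) (x : K) : Ideal D where
  carrier := {a | x * algebraMap D K a ∈ E}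
  zero_mem' := by simp
  add_mem' := by
    intro a b ha hb
    simp only [Set.mem_setOf_eq, map_add, mul_add] at *
    exact E.add_mem ha hb
  smul_mem' := by
    intro d a ha
    simp only [Set.mem_setOf_eq, smul_eq_mul, map_mul] at *
    have := E.smul_mem d ha
    rw [Algebra.smul_def] at this
    rwa [mul_left_comm]

lemma exists_prime_not_mem (F : Set (Ideal D)) (hne : F.Nonempty)
    (hup : ∀ I ∈ F, ∀ J : Ideal D, I ≤ J → J ∈ F)
    (htr : ∀ I ∈ F, ∀ J : Ideal D, (∀ i ∈ I, J.colon (Ideal.span {i}) ∈ F) → J ∈ F)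
    (hft : ∀ I ∈ F, ∃ J ∈ F, J ≤ I ∧ J.FG)
    (I : Ideal D) (hI : I ∉ F) : ∃ P : Ideal D, P.IsPrime ∧ I ≤ P ∧ P ∉ F := by
  have htop : (⊤ : Ideal D) ∈ F := by
    obtain ⟨I₀, hI₀⟩ := hne; exact hup I₀ hI₀ ⊤ le_top
  set s : Set (Ideal D) := {J | J ∉ F} with hs
  have hz : ∀ c ⊆ s, IsChain (· ≤ ·) c → ∀ y ∈ c, ∃ ub ∈ s, ∀ z ∈ c, z ≤ ub := by
    intro c hc hchain y hy
    refine ⟨sSup c, fun hsup => ?_, fun z hz => le_sSup hz⟩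
    obtain ⟨J, hJF, hJle, hJfg⟩ := hft _ hsup
    obtain ⟨z, hzc, hJz⟩ :=
      (CompleteLattice.isCompactElement_iff_le_of_directed_sSup_le _ J).mp
        ((Submodule.fg_iff_compact J).mp hJfg) c ⟨y, hy⟩ hchain.directedOn hJle
    exact hc hzc (hup J hJF z hJz)
  obtain ⟨m, hIm, hm⟩ := zorn_le_nonempty₀ s hz I hI
  have hmF : m ∉ F := hm.prop
  refine ⟨m, ⟨fun htopm => hmF (htopm ▸ htop), ?_⟩, hIm, hmF⟩
  intro a b hab
  by_contra hcon
  push_neg at hcon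
  obtain ⟨ha, hb⟩ := hcon
  have key : ∀ x : D, x ∉ m → m ⊔ Ideal.span {x} ∈ F := by
    intro x hx
    by_contra hxF
    exact hx (hm.2 hxF le_sup_left (Submodule.mem_sup_right (Ideal.mem_span_singleton_self x)))
  apply hmF
  refine htr _ (key a ha) m fun i hi => ?_
  refine hup _ (key b hb) _ fun z hz => ?_
  rw [Ideal.mem_colon_span_singleton]
  obtain ⟨p', hp', q', hq', rfl⟩ := Submodule.mem_sup.mp hi
  obtain ⟨e, rfl⟩ := Ideal.mem_span_singleton'.mp hq'
  obtain ⟨p, hp, q, hq, rfl⟩ := Submodule.mem_sup.mp hz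
  obtain ⟨d, rfl⟩ := Ideal.mem_span_singleton'.mp hq
  have : (p + d * b) * (p' + e * a) = p * (p' + e * a) + p' * (d * b) + (d * e) * (a * b) := by
    ring
  rw [this]
  exact m.add_mem (m.add_mem (m.mul_mem_right _ hp) (m.mul_mem_right _ hp'))
    (m.mul_mem_left _ hab)

lemma polyOfList_mem_SF (F : Set (Ideal D))
    (hup : ∀ I ∈ F, ∀ J : Ideal D, I ≤ J → J ∈ F)
    (J : Ideal D) (hJF : J ∈ F) (ss : Finset D) (hspan : Ideal.span ↑ss = J) :
    polyOfList ss.toList ∈ SF F := by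
  intro Q hQ hQF
  by_contra hcon
  push_neg at hcon
  apply hQF
  refine hup J hJF Q ?_
  rw [← hspan, Ideal.span_le]
  exact fun a ha => mem_of_polyOfList_coeffs ss Q hcon a ha

/-- for a localizing system of finite type `F` on `D`, the set `S(F)` is an
extended saturated multiplicative subset of `D[X]` and `E_F = E·D[X]_{S(F)} ∩ K` for
every nonzero `D`-submodule `E` of `K`. -/
theorem SF_extSat_and_EF_eq (F : Set (Ideal D)) (hne : F.Nonempty) (h0 : ⊥ ∉ F)
    (hup : ∀ I ∈ F, ∀ J : Ideal D, I ≤ J → J ∈ F)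
    (htr : ∀ I ∈ F, ∀ J : Ideal D, (∀ i ∈ I, J.colon (Ideal.span {i}) ∈ F) → J ∈ F)
    (hft : ∀ I ∈ F, ∃ J ∈ F, J ≤ I ∧ J.FG) :
    (1 : D[X]) ∈ SF F ∧
    (∀ a b : D[X], a ∈ SF F → b ∈ SF F → a * b ∈ SF F) ∧
    SF F = eSat (SF F) ∧
    (∀ E : Submodule D K, E ≠ ⊥ →
      (⋃ I ∈ F, {x : K | ∀ a ∈ I, x * algebraMap D K a ∈ E}) = circSet (SF F) E) := by
  have hQd : ∀ (Q : Ideal D) (p : D[X]),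
      (∃ k, p.coeff k ∉ Q) ↔ p.map (Ideal.Quotient.mk Q) ≠ 0 := by
    intro Q p
    rw [Ne, Polynomial.ext_iff]
    push_neg
    simp [Polynomial.coeff_map, Ideal.Quotient.eq_zero_iff_mem]
  refine ⟨?_, ?_, ?_, ?_⟩
  · intro Q hQ hQF
    exact ⟨0, by simpa [Polynomial.coeff_one] using (Ideal.ne_top_iff_one Q).mp hQ.ne_top⟩
  · intro a b ha hb Q hQ hQF
    haveI := hQ
    rw [hQd] at *
    rw [Polynomial.map_mul]
    exact mul_ne_zero (hQd Q a |>.mp (ha Q hQ hQF)) (hQd Q b |>.mp (hb Q hQ hQF))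
  · ext g
    constructor
    · intro hg P hP hPS
      by_cases hPF : P ∈ F
      · obtain ⟨J, hJF, hJP, hJfg⟩ := hft P hPF
        obtain ⟨ss, hspan⟩ := hJfg
        exfalso
        obtain ⟨n, hn⟩ := hPS _ (polyOfList_mem_SF F hup J hJF ss hspan)
        exact hn (hJP (polyOfList_coeff_mem ss J
          (fun a ha => hspan ▸ Ideal.subset_span ha) n))
      · exact hg P hP hPF
    · intro hg Q hQ hQF
      exact hg Q hQ (fun h hh => hh Q hQ hQF)
  · intro E hE
    ext x
    simp only [Set.mem_iUnion]
    constructor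
    · rintro ⟨I, hIF, hx⟩
      obtain ⟨J, hJF, hJI, hJfg⟩ := hft I hIF
      obtain ⟨ss, hspan⟩ := hJfg
      exact ⟨polyOfList ss.toList, polyOfList_mem_SF F hup J hJF ss hspan,
        fun n => hx _ (hJI (polyOfList_coeff_mem ss J
          (fun a ha => hspan ▸ Ideal.subset_span ha) n))⟩
    · rintro ⟨g, hgSF, hg⟩
      set I₀ : Ideal D := Ideal.span {a | ∃ n, a = g.coeff n} with hI₀
      have hI₀F : I₀ ∈ F := by
        by_contra hcon
        obtain ⟨P, hP, hIP, hPF⟩ := exists_prime_not_mem F hne hup htr hft I₀ hcon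
        obtain ⟨n, hn⟩ := hgSF P hP hPF
        exact hn (hIP (Ideal.subset_span ⟨n, rfl⟩))
      refine ⟨I₀, hI₀F, fun a ha => ?_⟩
      have : I₀ ≤ memIdeal E x := by
        rw [hI₀, Ideal.span_le]
        rintro a ⟨n, rfl⟩
        exact hg n
      exact this ha
end

section
/- The map F ↦ S(F) := D[X] \ ⋃{Q[X] : Q ∈ Spec(D), Q ∉ F} is a bijection from the set of localizing systems of finite type on the integral domain D to the set of extended saturated multiplicative subsets of D[X], with inverse S ↦ ⋂{F(P) : P ∈ Spec(D), P[X] ∩ S = ∅}, where F(P) := {I ideal of D : I ⊄ P}. -/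
set_option linter.unusedSectionVars false

open Polynomial

variable {D : Type*} [CommRing D] [IsDomain D]

/-- `F` is a (nontrivial) localizing system of finite type on `D`. -/
def IsLocSysFT (F : Set (Ideal D)) : Prop :=
  F.Nonempty ∧ ⊥ ∉ F ∧
    (∀ I ∈ F, ∀ J : Ideal D, I ≤ J → J ∈ F) ∧
    (∀ I ∈ F, ∀ J : Ideal D, (∀ i ∈ I, J.colon (Ideal.span {i}) ∈ F) → J ∈ F) ∧
    (∀ I ∈ F, ∃ J ∈ F, J ≤ I ∧ J.FG)

/-- `S` is an extended saturated multiplicative subset of `D[X]` (not containing `0`),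
i.e. `S = D[X] \ ⋃ {P[X] : P ∈ Spec D, P[X] ∩ S = ∅}`. -/
def IsExtSat (S : Set D[X]) : Prop :=
  (1 : D[X]) ∈ S ∧ (∀ a b : D[X], a ∈ S → b ∈ S → a * b ∈ S) ∧ (0 : D[X]) ∉ S ∧
    S = {g | ∀ P : Ideal D, P.IsPrime → (∀ h ∈ S, ∃ n, h.coeff n ∉ P) → ∃ n, g.coeff n ∉ P}

/-- `F(S) := ⋂ {F(P) : P ∈ Spec D, P[X] ∩ S = ∅}`, where `F(P) = {I : I ⊄ P}`. -/
def FS (S : Set D[X]) : Set (Ideal D) :=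
  {I | ∀ P : Ideal D, P.IsPrime → (∀ g ∈ S, ∃ n, g.coeff n ∉ P) → ¬ I ≤ P}

/-- In a chain of ideals containing some `e0`, finitely many elements, each lying in some
member of the chain, all lie in a common member. -/
private lemma chain_finset {c : Set (Ideal D)} (hc : IsChain (· ≤ ·) c) {e0 : Ideal D}
    (he0 : e0 ∈ c) (s : Finset D) (h : ∀ x ∈ s, ∃ e ∈ c, x ∈ e) :
    ∃ e ∈ c, ∀ x ∈ s, x ∈ e := by
  classical
  induction s using Finset.induction_on with
  | empty => exact ⟨e0, he0, by simp⟩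
  | @insert a t _ ih =>
    obtain ⟨e, hec, he⟩ := ih (fun x hx => h x (Finset.mem_insert_of_mem hx))
    obtain ⟨f, hfc, hf⟩ := h a (Finset.mem_insert_self a t)
    rcases eq_or_ne e f with rfl | hef
    · exact ⟨e, hec, fun x hx => by
        rcases Finset.mem_insert.1 hx with rfl | hx
        · exact hf
        · exact he x hx⟩
    rcases hc.total hec hfc with hle | hle
    · exact ⟨f, hfc, fun x hx => by
        rcases Finset.mem_insert.1 hx with rfl | hx
        · exact hf
        · exact hle (he x hx)⟩
    · exact ⟨e, hec, fun x hx => by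
        rcases Finset.mem_insert.1 hx with rfl | hx
        · exact hle hf
        · exact he x hx⟩

private lemma exists_coeff_notMem_iff (Q : Ideal D) (g : D[X]) :
    (∃ n, g.coeff n ∉ Q) ↔ Polynomial.map (Ideal.Quotient.mk Q) g ≠ 0 := by
  constructor
  · rintro ⟨n, hn⟩ h0
    exact hn (Ideal.Quotient.eq_zero_iff_mem.1 (by rw [← coeff_map, h0, coeff_zero]))
  · intro h0
    by_contra h
    push_neg at h
    exact h0 (Polynomial.ext fun n => by
      rw [coeff_map, coeff_zero, Ideal.Quotient.eq_zero_iff_mem]; exact h n)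

private lemma mul_coeff_notMem {Q : Ideal D} (hQ : Q.IsPrime) {a b : D[X]}
    (ha : ∃ n, a.coeff n ∉ Q) (hb : ∃ n, b.coeff n ∉ Q) :
    ∃ n, (a * b).coeff n ∉ Q := by
  haveI := hQ
  rw [exists_coeff_notMem_iff] at ha hb ⊢
  rw [Polynomial.map_mul]
  exact mul_ne_zero ha hb

private lemma sup_mul_mem {P : Ideal D} {a b x y : D} (hab : a * b ∈ P)
    (hx : x ∈ P ⊔ Ideal.span {a}) (hy : y ∈ P ⊔ Ideal.span {b}) : x * y ∈ P := by
  obtain ⟨p, hp, r, hr, rfl⟩ := Submodule.mem_sup.1 hx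
  obtain ⟨q, hq, s, hs, rfl⟩ := Submodule.mem_sup.1 hy
  obtain ⟨cc, rfl⟩ := Ideal.mem_span_singleton.1 hr
  obtain ⟨d, rfl⟩ := Ideal.mem_span_singleton.1 hs
  have : (p + a * cc) * (q + b * d) = p * (q + b * d) + q * (a * cc) + (a * b) * (cc * d) := by
    ring
  rw [this]
  exact P.add_mem (P.add_mem (P.mul_mem_right _ hp) (P.mul_mem_right _ hq))
    (P.mul_mem_right _ hab)

/-- Lemma A: in a localizing system of finite type, an ideal not in `F` is contained in a
prime not in `F`. -/
private lemma exists_prime_of_notMem {F : Set (Ideal D)} (hF : IsLocSysFT F)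
    {I : Ideal D} (hI : I ∉ F) : ∃ Q : Ideal D, Q.IsPrime ∧ Q ∉ F ∧ I ≤ Q := by
  obtain ⟨hne, hbot, hup, htr, hft⟩ := hF
  have htop : (⊤ : Ideal D) ∈ F := hup _ hne.choose_spec _ le_top
  set s : Set (Ideal D) := {J | J ∉ F} with hs
  have hzorn := zorn_le_nonempty₀ s ?_ I hI
  · obtain ⟨Q, hIQ, hQmax⟩ := hzorn
    have hQF : Q ∉ F := hQmax.1
    refine ⟨Q, Ideal.isPrime_iff.2 ⟨fun h => hQF (h ▸ htop), ?_⟩, hQF, hIQ⟩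
    intro a b hab
    by_contra hcon
    push_neg at hcon
    obtain ⟨ha, hb⟩ := hcon
    have hQa : Q ⊔ Ideal.span {a} ∈ F := by
      by_contra h'
      exact ha (hQmax.2 h' le_sup_left (Ideal.mem_sup_right
        (Ideal.mem_span_singleton_self a)))
    have hQb : Q ⊔ Ideal.span {b} ∈ F := by
      by_contra h'
      exact hb (hQmax.2 h' le_sup_left (Ideal.mem_sup_right
        (Ideal.mem_span_singleton_self b)))
    refine hQF (htr _ hQa Q fun i hi => hup _ hQb _ fun x hx => ?_)
    exact Ideal.mem_colon_span_singleton.2 (sup_mul_mem (mul_comm a b ▸ hab) hx hi)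
  · intro c hcs hc y hy
    refine ⟨sSup c, ?_, fun z hz => le_sSup hz⟩
    intro hsup
    obtain ⟨J, hJF, hJle, t, ht⟩ := hft _ hsup
    have htmem : ∀ x ∈ t, ∃ e ∈ c, x ∈ e := fun x hx =>
      (Submodule.mem_sSup_of_directed ⟨y, hy⟩ hc.directedOn).1
        (hJle (ht ▸ Ideal.subset_span hx))
    obtain ⟨e, hec, he⟩ := chain_finset hc hy t htmem
    exact hcs hec (hup J hJF e (ht ▸ (Ideal.span_le.2 fun x hx => he x hx)))

/-- Given a finite set `t`, there is a polynomial whose coefficients lie in `span t` and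
which realizes every element of `t` as a coefficient. -/
private lemma exists_poly (t : Finset D) :
    ∃ h : D[X], (∀ n, h.coeff n ∈ Ideal.span (↑t : Set D)) ∧
      ∀ x ∈ t, ∃ n, h.coeff n = x := by
  classical
  set l := t.toList with hl
  refine ⟨∑ i ∈ Finset.range l.length, Polynomial.C (l.getD i 0) * X ^ i, ?_, ?_⟩ <;>
    have hcoeff : ∀ n, (∑ i ∈ Finset.range l.length,
        Polynomial.C (l.getD i 0) * X ^ i).coeff n =
        if n ∈ Finset.range l.length then l.getD n 0 else 0 := by
      intro n
      rw [Polynomial.finset_sum_coeff]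
      rw [Finset.sum_congr rfl (fun i _ => by
        rw [Polynomial.coeff_C_mul, Polynomial.coeff_X_pow, mul_ite, mul_one, mul_zero])]
      simp [Finset.sum_ite_eq]
  · intro n
    rw [hcoeff]
    split_ifs with hn
    · rw [Finset.mem_range] at hn
      rw [List.getD_eq_getElem l 0 hn]
      exact Ideal.subset_span (Finset.mem_coe.2 (Finset.mem_toList.1 (List.getElem_mem hn)))
    · exact zero_mem _
  · intro x hx
    have hxl : x ∈ l := Finset.mem_toList.2 hx
    obtain ⟨n, hn, hget⟩ := List.getElem_of_mem hxl
    refine ⟨n, ?_⟩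
    rw [hcoeff, if_pos (Finset.mem_range.2 hn), List.getD_eq_getElem l 0 hn, hget]

/-- Zorn argument for part 2: if no element of a multiplicative set `S` has all coefficients
in `I`, then `I` is contained in a prime `P` with `P[X] ∩ S = ∅`. -/
private lemma exists_prime_avoid {S : Set D[X]} (h1 : (1 : D[X]) ∈ S)
    (hmul : ∀ a b : D[X], a ∈ S → b ∈ S → a * b ∈ S) {I : Ideal D}
    (hI : ∀ g ∈ S, ∃ n, g.coeff n ∉ I) :
    ∃ P : Ideal D, P.IsPrime ∧ I ≤ P ∧ ∀ g ∈ S, ∃ n, g.coeff n ∉ P := by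
  classical
  set s : Set (Ideal D) := {J | ∀ g ∈ S, ∃ n, g.coeff n ∉ J} with hs
  have hzorn := zorn_le_nonempty₀ s ?_ I hI
  · obtain ⟨P, hIP, hPmax⟩ := hzorn
    have hPs : P ∈ s := hPmax.1
    refine ⟨P, Ideal.isPrime_iff.2 ⟨?_, ?_⟩, hIP, hPs⟩
    · intro h
      obtain ⟨n, hn⟩ := hPs 1 h1
      exact hn (h ▸ Submodule.mem_top)
    · intro a b hab
      by_contra hcon
      push_neg at hcon
      obtain ⟨ha, hb⟩ := hcon
      have hPa : P ⊔ Ideal.span {a} ∉ s := by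
        intro h'
        exact ha (hPmax.2 h' le_sup_left (Ideal.mem_sup_right
          (Ideal.mem_span_singleton_self a)))
      have hPb : P ⊔ Ideal.span {b} ∉ s := by
        intro h'
        exact hb (hPmax.2 h' le_sup_left (Ideal.mem_sup_right
          (Ideal.mem_span_singleton_self b)))
      rw [hs, Set.mem_setOf_eq] at hPa hPb
      push_neg at hPa hPb
      obtain ⟨g, hgS, hg⟩ := hPa
      obtain ⟨h, hhS, hh⟩ := hPb
      obtain ⟨n, hn⟩ := hPs (g * h) (hmul g h hgS hhS)
      refine hn ?_
      rw [Polynomial.coeff_mul]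
      exact Ideal.sum_mem _ fun x _ => sup_mul_mem hab (hg x.1) (hh x.2)
  · intro c hcs hc y hy
    refine ⟨sSup c, ?_, fun z hz => le_sSup hz⟩
    intro g hgS
    by_contra hcon
    push_neg at hcon
    have hmem : ∀ x ∈ g.support.image g.coeff, ∃ e ∈ c, x ∈ e := by
      intro x hx
      obtain ⟨n, _, rfl⟩ := Finset.mem_image.1 hx
      exact (Submodule.mem_sSup_of_directed ⟨y, hy⟩ hc.directedOn).1 (hcon n)
    obtain ⟨e, hec, he⟩ := chain_finset hc hy _ hmem
    obtain ⟨n, hn⟩ := hcs hec g hgS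
    refine hn ?_
    by_cases h0 : g.coeff n = 0
    · rw [h0]; exact zero_mem _
    · exact he _ (Finset.mem_image.2 ⟨n, Polynomial.mem_support_iff.2 h0, rfl⟩)

/-- `F ↦ S(F)` is a bijection from localizing systems of finite type on `D`
onto extended saturated multiplicative subsets of `D[X]`, with inverse `S ↦ F(S)`. -/
theorem SF_FS_bijection :
    (∀ F : Set (Ideal D), IsLocSysFT F → IsExtSat (SF F) ∧ FS (SF F) = F) ∧
    (∀ S : Set D[X], IsExtSat S → IsLocSysFT (FS S) ∧ SF (FS S) = S) := by
  constructor
  · -- Part 1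
    intro F hF
    obtain ⟨hne, hbot, hup, htr, hft⟩ := hF
    -- Key equivalence: for prime P, (every element of SF F has a coeff outside P) → P ∉ F
    have K1 : ∀ P : Ideal D, P.IsPrime →
        (∀ g ∈ SF F, ∃ n, g.coeff n ∉ P) → P ∉ F := by
      intro P hP hcond hPF
      obtain ⟨J, hJF, hJP, t, ht⟩ := hft P hPF
      obtain ⟨h, hc1, hc2⟩ := exists_poly t
      have hhS : h ∈ SF F := by
        intro Q' hQ' hQ'F
        have hnle : ¬ Ideal.span (↑t : Set D) ≤ Q' := fun hle =>
          hQ'F (hup J hJF Q' (ht ▸ hle))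
        rw [Ideal.span_le] at hnle
        obtain ⟨x, hxt, hxQ'⟩ := Set.not_subset.1 hnle
        obtain ⟨n, hn⟩ := hc2 x hxt
        exact ⟨n, hn ▸ hxQ'⟩
      obtain ⟨n, hn⟩ := hcond h hhS
      exact hn (hJP (ht ▸ hc1 n))
    have hExt : IsExtSat (SF F) := by
      refine ⟨?_, ?_, ?_, ?_⟩
      · intro Q hQ hQF
        refine ⟨0, ?_⟩
        rw [Polynomial.coeff_one_zero]
        exact fun h => hQ.ne_top ((Ideal.eq_top_iff_one _).2 h)
      · intro a b ha hb Q hQ hQF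
        exact mul_coeff_notMem hQ (ha Q hQ hQF) (hb Q hQ hQF)
      · intro h
        obtain ⟨Q, hQ, hQF, _⟩ := exists_prime_of_notMem ⟨hne, hbot, hup, htr, hft⟩ hbot
        obtain ⟨n, hn⟩ := h Q hQ hQF
        exact hn (by rw [Polynomial.coeff_zero]; exact zero_mem _)
      · ext g
        constructor
        · intro hg P hP hcond
          exact hg P hP (K1 P hP hcond)
        · intro hg Q hQ hQF
          exact hg Q hQ (fun h hh => hh Q hQ hQF)
    refine ⟨hExt, ?_⟩
    ext I
    constructor
    · intro hI
      by_contra hIF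
      obtain ⟨Q, hQ, hQF, hIQ⟩ := exists_prime_of_notMem ⟨hne, hbot, hup, htr, hft⟩ hIF
      exact hI Q hQ (fun g hg => hg Q hQ hQF) hIQ
    · intro hIF P hP hcond hIP
      exact K1 P hP hcond (hup I hIF P hIP)
  · -- Part 2
    intro S hS
    obtain ⟨h1, hmul, h0, hsat⟩ := hS
    -- a prime P with P[X] ∩ S = ∅ exists (from 0 ∉ S and saturation)
    have h0' := h0
    rw [hsat, Set.mem_setOf_eq] at h0'
    push_neg at h0'
    obtain ⟨P0, hP0, hcond0, _⟩ := h0'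
    have hLoc : IsLocSysFT (FS S) := by
      refine ⟨⟨⊤, fun P hP _ hle => hP.ne_top (top_le_iff.1 hle)⟩, ?_, ?_, ?_, ?_⟩
      · intro hb
        exact hb P0 hP0 hcond0 bot_le
      · intro I hI J hIJ P hP hcond hJP
        exact hI P hP hcond (hIJ.trans hJP)
      · intro I hI J hcol P hP hcond hJP
        obtain ⟨i, hiI, hiP⟩ := SetLike.not_le_iff_exists.1 (hI P hP hcond)
        obtain ⟨x, hxc, hxP⟩ := SetLike.not_le_iff_exists.1 (hcol i hiI P hP hcond)
        rcases hP.mem_or_mem (hJP (Ideal.mem_colon_span_singleton.1 hxc)) with hx | hx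
        · exact hxP hx
        · exact hiP hx
      · intro I hI
        have hclaim : ∃ g ∈ S, ∀ n, g.coeff n ∈ I := by
          by_contra hc
          push_neg at hc
          obtain ⟨P, hP, hIP, hcond⟩ := exists_prime_avoid h1 hmul hc
          exact hI P hP hcond hIP
        obtain ⟨g, hgS, hg⟩ := hclaim
        classical
        refine ⟨Ideal.span (↑(g.support.image g.coeff) : Set D), ?_, ?_, ?_⟩
        · intro P hP hcond hle
          obtain ⟨n, hn⟩ := hcond g hgS
          refine hn (hle ?_)
          by_cases hz : g.coeff n = 0
          · rw [hz]; exact zero_mem _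
          · exact Ideal.subset_span
              (Finset.mem_coe.2 (Finset.mem_image.2 ⟨n, Polynomial.mem_support_iff.2 hz, rfl⟩))
        · refine Ideal.span_le.2 fun x hx => ?_
          obtain ⟨n, _, rfl⟩ := Finset.mem_image.1 (Finset.mem_coe.1 hx)
          exact hg n
        · exact ⟨_, rfl⟩
    refine ⟨hLoc, ?_⟩
    ext g
    constructor
    · intro hg
      rw [hsat, Set.mem_setOf_eq]
      intro P hP hcond
      exact hg P hP (fun hmem => hmem P hP hcond le_rfl)
    · intro hg Q hQ hQnot
      simp only [FS, Set.mem_setOf_eq] at hQnot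
      push_neg at hQnot
      obtain ⟨P, hP, hcond, hQP⟩ := hQnot
      rw [hsat, Set.mem_setOf_eq] at hg
      obtain ⟨n, hn⟩ := hg P hP hcond
      exact ⟨n, fun h => hn (hQP h)⟩
end

section
/- Let D be an integral domain with quotient field K and S a multiplicative subset of D[X] with S extended saturated. Then the Nagata ring Na(D, ∘_S) := D[X]_{N^{∘_S}} equals D[X]_S, where N^{∘_S} := {g ∈ D[X] : g ≠ 0 and c_D(g)^{∘_S} = D^{∘_S}} and ∘_S is the semistar operation E ↦ E·D[X]_S ∩ K. -/
set_option linter.unusedSectionVars false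

open Polynomial Pointwise

variable {D K : Type*} [CommRing D] [IsDomain D] [Field K] [Algebra D K] [IsFractionRing D K]

/-- The localization `D[X]_T` of `D[X]` at a subset `T ⊆ D[X]`, viewed inside
`K(X) = Frac(D[X])`: the elements of the form `f/g` with `f ∈ D[X]`, `g ∈ T`. -/
def locDX (T : Set D[X]) : Set (FractionRing D[X]) :=
  {z | ∃ f : D[X], ∃ g ∈ T,
    algebraMap D[X] (FractionRing D[X]) g * z = algebraMap D[X] (FractionRing D[X]) f}

lemma circ_mono (S : Submonoid D[X]) {E F : Submodule D K} (h : E ≤ F) :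
    circ S E ≤ circ S F := by
  rintro x ⟨g, hg, hx⟩
  exact ⟨g, hg, fun n => h (hx n)⟩

/-- If `g ∈ S` is arbitrary, then `c(g)^∘ = D^∘`. -/
lemma circ_content_of_mem (S : Submonoid D[X]) {g : D[X]} (hg : g ∈ S) :
    circ S (contentK (K := K) g) = circ S (1 : Submodule D K) := by
  apply le_antisymm
  · refine circ_mono S ?_
    rw [contentK, Submodule.span_le]
    rintro _ ⟨n, rfl⟩
    exact Submodule.algebraMap_mem _
  · rintro x ⟨h, hh, hx⟩
    refine ⟨h * g, S.mul_mem hh hg, fun n => ?_⟩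
    rw [Polynomial.coeff_mul, map_sum, Finset.mul_sum]
    refine Submodule.sum_mem _ fun ij _ => ?_
    obtain ⟨d, hd⟩ := (Submodule.mem_one).1 (hx ij.1)
    rw [map_mul, ← mul_assoc, ← hd, ← Algebra.smul_def]
    exact Submodule.smul_mem _ d
      (Submodule.subset_span ⟨ij.2, rfl⟩)

/-- Elements of `N^{∘_S}` lie in `S` when `S` is extended saturated. -/
lemma mem_of_circ_content (S : Submonoid D[X])
    (hsat : (S : Set D[X]) = eSat (S : Set D[X])) {g : D[X]}
    (hg : circ S (contentK (K := K) g) = circ S (1 : Submodule D K)) : g ∈ S := by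
  have h1 : (1 : K) ∈ circ S (1 : Submodule D K) :=
    ⟨1, S.one_mem, fun n => by rw [one_mul]; exact Submodule.algebraMap_mem _⟩
  rw [← hg] at h1
  obtain ⟨h, hhS, hh⟩ := h1
  have hh' : ∀ n, algebraMap D K (h.coeff n) ∈ contentK (K := K) g := by
    intro n; have := hh n; rwa [one_mul] at this
  have : g ∈ eSat (S : Set D[X]) := by
    intro P hP hall
    obtain ⟨n, hn⟩ := hall h hhS
    by_contra hcon
    push_neg at hcon
    apply hn
    have hle : contentK (K := K) g ≤
        Submodule.map (Algebra.linearMap D K) (P : Submodule D D) := by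
      rw [contentK, Submodule.span_le]
      rintro _ ⟨m, rfl⟩
      exact ⟨g.coeff m, hcon m, rfl⟩
    obtain ⟨p, hpP, hpe⟩ := hle (hh' n)
    have : p = h.coeff n := IsFractionRing.injective D K hpe
    exact this ▸ hpP
  rw [← hsat] at this
  exact this

/-- for `S` extended saturated, the Nagata ring
`Na(D, ∘_S) = D[X]_{N^{∘_S}}`, where `N^{∘_S} = {g ≠ 0 : c_D(g)^{∘_S} = D^{∘_S}}`,
coincides with `D[X]_S`. -/
theorem nagata_eq_loc (S : Submonoid D[X]) (hsat : (S : Set D[X]) = eSat (S : Set D[X])) :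
    locDX (D := D) {g : D[X] | g ≠ 0 ∧ circ S (contentK (K := K) g) = circ S (1 : Submodule D K)} =
      locDX (D := D) (S : Set D[X]) := by
  ext z
  constructor
  · rintro ⟨f, g, ⟨hg0, hgN⟩, hz⟩
    exact ⟨f, g, mem_of_circ_content S hsat hgN, hz⟩
  · rintro ⟨f, g, hgS, hz⟩
    by_cases hg0 : g = 0
    · -- degenerate case: `0 ∈ S`, every `circ S E` is the whole of `K`.
      subst hg0
      have h0S : (0 : D[X]) ∈ S := hgS
      have htop : ∀ E : Submodule D K, circ S E = ⊤ := by
        intro E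
        rw [eq_top_iff]
        rintro x -
        exact ⟨0, h0S, fun n => by simp⟩
      obtain ⟨⟨f', g'⟩, hfg⟩ := IsLocalization.surj (nonZeroDivisors D[X]) z
      refine ⟨f', g', ⟨nonZeroDivisors.ne_zero g'.2, by rw [htop, htop]⟩, ?_⟩
      rw [mul_comm]
      exact hfg
    · exact ⟨f, g, ⟨hg0, circ_content_of_mem S hgS⟩, hz⟩
end
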